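/- arXiv:0808.2731 — 2 statements merged into one kernel-verified Lean document; each statement's English description precedes it below -/
import Mathlib

section
/- Suppose u*(y) > 0 for every y ∈ Bᶜ, and define P*(y, dz) = P(y, dz) u*(z)/u*(y) for y ∈ Bᶜ. Then the chain with transition kernel P* almost surely reaches A: for every y ∈ Bᶜ, P*_y(T < ∞) = 1 and P*_y(Y_T ∈ A) = 1. -/
open MeasureTheory ProbabilityTheory Filter Set
open scoped ENNReal NNReal

noncomputable section

/-- Prepend a point to a path. -/
def prepend {𝒳 : Type*} (y : 𝒳) (ω : ℕ → 𝒳) : ℕ → 𝒳 := fun n =>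
  match n with
  | 0 => y
  | k + 1 => ω k

/-- First hitting time of `B` (with value `⊤` if `B` is never hit). -/
def hitTime {𝒳 : Type*} (B : Set 𝒳) (ω : ℕ → 𝒳) : ℕ∞ :=
  sInf ((fun n : ℕ => (n : ℕ∞)) '' {n : ℕ | ω n ∈ B})

/-- `u*(y) = P_y(T < ∞, Y_T ∈ A)`, where `μ y` is the law of the chain started at `y`. -/
def uStar {𝒳 : Type*} [MeasurableSpace 𝒳] (B A : Set 𝒳)
    (μ : 𝒳 → Measure (ℕ → 𝒳)) (y : 𝒳) : ℝ≥0∞ :=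
  μ y {ω | ∃ n : ℕ, hitTime B ω = (n : ℕ∞) ∧ ω n ∈ A}

section aux

variable {𝒳 : Type*}

lemma measurable_prepend [MeasurableSpace 𝒳] (y : 𝒳) : Measurable (prepend y) := by
  apply measurable_pi_lambda
  intro n
  cases n with
  | zero => exact measurable_const
  | succ k => exact measurable_pi_apply k

lemma hitTime_eq_iff (B : Set 𝒳) (ω : ℕ → 𝒳) (n : ℕ) :
    hitTime B ω = (n : ℕ∞) ↔ ω n ∈ B ∧ ∀ k < n, ω k ∉ B := by
  constructor
  · intro h
    have hklt : ∀ k < n, ω k ∉ B := by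
      intro k hk hkB
      have : hitTime B ω ≤ (k : ℕ∞) := sInf_le ⟨k, hkB, rfl⟩
      rw [h] at this
      exact absurd (Nat.cast_le.mp this) (Nat.not_le.mpr hk)
    refine ⟨?_, hklt⟩
    by_contra hnB
    have : (n : ℕ∞) + 1 ≤ hitTime B ω := by
      apply le_sInf
      rintro x ⟨k, hkB, rfl⟩
      have hkn : n < k := by
        by_contra hc
        rcases Nat.lt_or_ge k n with h1 | h1
        · exact hklt k h1 hkB
        · have : k = n := le_antisymm (Nat.not_lt.mp hc) h1
          exact hnB (this ▸ hkB)
      show ((n : ℕ∞)) + 1 ≤ ((k : ℕ) : ℕ∞)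
      exact_mod_cast Nat.succ_le_of_lt hkn
    rw [h] at this
    rw [← Nat.cast_one, ← Nat.cast_add] at this
    exact absurd (Nat.cast_le.mp this) (by omega)
  · rintro ⟨hnB, hklt⟩
    refine le_antisymm (sInf_le ⟨n, hnB, rfl⟩) ?_
    apply le_sInf
    rintro x ⟨k, hkB, rfl⟩
    have : n ≤ k := by
      by_contra hc
      exact hklt k (Nat.not_le.mp hc) hkB
    show ((n : ℕ) : ℕ∞) ≤ ((k : ℕ) : ℕ∞)
    exact_mod_cast this

/-- The event "hit `B` at time exactly `n`, in `A`", in explicit form. -/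
def Efin (B A : Set 𝒳) (n : ℕ) : Set (ℕ → 𝒳) := {ω | ω n ∈ A ∧ ∀ k < n, ω k ∉ B}

lemma Efin_measurable [MeasurableSpace 𝒳] (B A : Set 𝒳) (hB : MeasurableSet B)
    (hA : MeasurableSet A) (n : ℕ) : MeasurableSet (Efin B A n) := by
  have h1 : MeasurableSet {ω : ℕ → 𝒳 | ω n ∈ A} := measurable_pi_apply n hA
  have h2 : MeasurableSet {ω : ℕ → 𝒳 | ∀ k < n, ω k ∉ B} := by
    have : {ω : ℕ → 𝒳 | ∀ k < n, ω k ∉ B} = ⋂ k ∈ Finset.range n, (fun ω => ω k) ⁻¹' Bᶜ := by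
      ext ω; simp [Set.mem_iInter]
    rw [this]
    exact MeasurableSet.biInter (Finset.range n).countable_toSet
      fun k _ => measurable_pi_apply k hB.compl
  exact h1.inter h2

lemma event_eq_iUnion (B A : Set 𝒳) (hAB : A ⊆ B) :
    {ω : ℕ → 𝒳 | ∃ n : ℕ, hitTime B ω = (n : ℕ∞) ∧ ω n ∈ A} = ⋃ n, Efin B A n := by
  ext ω
  simp only [Set.mem_setOf_eq, Set.mem_iUnion]
  constructor
  · rintro ⟨n, hn, hnA⟩
    rw [hitTime_eq_iff] at hn
    exact ⟨n, hnA, hn.2⟩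
  · rintro ⟨n, hnA, hk⟩
    exact ⟨n, (hitTime_eq_iff B ω n).mpr ⟨hAB hnA, hk⟩, hnA⟩

lemma Efin_disjoint (B A : Set 𝒳) (hAB : A ⊆ B) : Pairwise (Function.onFun Disjoint (Efin B A)) := by
  intro n m hnm
  wlog h : n < m generalizing n m
  · exact (this hnm.symm (by omega)).symm
  refine Set.disjoint_left.mpr ?_
  rintro ω ⟨hnA, _⟩ ⟨_, hk⟩
  exact hk n h (hAB hnA)

lemma prepend_preimage_Efin_succ (B A : Set 𝒳) (y : 𝒳) (hy : y ∉ B) (n : ℕ) :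
    prepend y ⁻¹' Efin B A (n + 1) = Efin B A n := by
  ext ω
  simp only [Set.mem_preimage, Efin, Set.mem_setOf_eq]
  constructor
  · rintro ⟨h1, h2⟩
    exact ⟨h1, fun k hk => h2 (k + 1) (by omega)⟩
  · rintro ⟨h1, h2⟩
    refine ⟨h1, ?_⟩
    intro k hk
    cases k with
    | zero => exact hy
    | succ j => exact h2 j (by omega)

lemma prepend_preimage_Efin_succ_mem (B A : Set 𝒳) (y : 𝒳) (hy : y ∈ B) (n : ℕ) :
    prepend y ⁻¹' Efin B A (n + 1) = ∅ := by
  ext ω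
  simp only [Set.mem_preimage, Efin, Set.mem_setOf_eq, Set.mem_empty_iff_false, iff_false]
  rintro ⟨_, h2⟩
  exact h2 0 (by omega) hy

lemma prepend_preimage_Efin_zero (B A : Set 𝒳) (y : 𝒳) :
    prepend y ⁻¹' Efin B A 0 = {ω : ℕ → 𝒳 | y ∈ A} := by
  ext ω
  simp [Efin, prepend]

end aux

/-- the chain with transition kernel `P*` almost surely reaches `A`:
for every `y ∈ Bᶜ`, `P*_y(T < ∞) = 1` and `P*_y(Y_T ∈ A) = 1`. -/
theorem statement3 {𝒳 : Type*} [MeasurableSpace 𝒳] [StandardBorelSpace 𝒳]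
    (P : Kernel 𝒳 𝒳) [IsMarkovKernel P]
    (B A : Set 𝒳) (hB : MeasurableSet B) (hA : MeasurableSet A) (hAB : A ⊆ B)
    -- `μ y` is the law of the Markov chain with kernel `P` started at `y`
    (μ : 𝒳 → Measure (ℕ → 𝒳)) (hμmeas : Measurable μ)
    (hμprob : ∀ y, IsProbabilityMeasure (μ y))
    (hμchain : ∀ y, μ y = (P y).bind fun z => (μ z).map (prepend y))
    -- positivity of `u*` off `B`
    (hupos : ∀ y ∉ B, 0 < uStar B A μ y)
    -- the kernel `P*`
    (Pstar : Kernel 𝒳 𝒳)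
    (hPstar : ∀ y ∉ B,
      Pstar y = (P y).withDensity fun z => uStar B A μ z / uStar B A μ y)
    (hPstarAbs : ∀ y ∈ B, Pstar y = Measure.dirac y)
    -- `ν y` is the law of the Markov chain with kernel `P*` started at `y`
    (ν : 𝒳 → Measure (ℕ → 𝒳)) (hνmeas : Measurable ν)
    (hνprob : ∀ y, IsProbabilityMeasure (ν y))
    (hνchain : ∀ y, ν y = (Pstar y).bind fun z => (ν z).map (prepend y)) :
    ∀ y ∉ B,
      ν y {ω | hitTime B ω ≠ ⊤} = 1 ∧
      ν y {ω | ∃ n : ℕ, hitTime B ω = (n : ℕ∞) ∧ ω n ∈ A} = 1 := by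
  set u := uStar B A μ with hu
  set E : Set (ℕ → 𝒳) := {ω | ∃ n : ℕ, hitTime B ω = (n : ℕ∞) ∧ ω n ∈ A} with hE
  have hEun : E = ⋃ n, Efin B A n := event_eq_iUnion B A hAB
  have hEfinMeas : ∀ n, MeasurableSet (Efin B A (n : ℕ) : Set (ℕ → 𝒳)) :=
    Efin_measurable B A hB hA
  have hEmeas : MeasurableSet E := hEun ▸ MeasurableSet.iUnion hEfinMeas
  -- measurability of u
  have humeas : Measurable u := (Measure.measurable_coe hEmeas).comp hμmeas
  -- u ≤ 1, so finite
  have hule : ∀ z, u z ≤ 1 := fun z => by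
    have := hμprob z
    calc u z ≤ μ z Set.univ := measure_mono (Set.subset_univ _)
    _ = 1 := measure_univ
  have hune : ∀ z, u z ≠ ⊤ := fun z => ne_top_of_le_ne_top ENNReal.one_ne_top (hule z)
  have bind_eval : ∀ (ρ : Measure 𝒳) (κ : 𝒳 → Measure (ℕ → 𝒳)), Measurable κ →
      ∀ (y : 𝒳) {S : Set (ℕ → 𝒳)}, MeasurableSet S →
      (ρ.bind fun z => (κ z).map (prepend y)) S = ∫⁻ z, κ z (prepend y ⁻¹' S) ∂ρ := by
    intro ρ κ hκ y S hS
    have hm : Measurable fun z => (κ z).map (prepend y) :=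
      (Measure.measurable_map _ (measurable_prepend y)).comp hκ
    rw [Measure.bind_apply hS hm.aemeasurable]
    refine lintegral_congr fun z => ?_
    exact Measure.map_apply (measurable_prepend y) hS
  -- a.e. the path starts at the starting point
  have start_ae : ∀ (κ : 𝒳 → Measure (ℕ → 𝒳)) (κ' : Kernel 𝒳 𝒳), Measurable κ →
      (∀ y, κ y = (κ' y).bind fun z => (κ z).map (prepend y)) →
      ∀ y : 𝒳, κ y {ω | ω 0 ≠ y} = 0 := by
    intro κ κ' hκ hchain y
    have hSmeas : MeasurableSet {ω : ℕ → 𝒳 | ω 0 ≠ y} := by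
      have : {ω : ℕ → 𝒳 | ω 0 ≠ y} = (fun ω : ℕ → 𝒳 => ω 0) ⁻¹' ({y}ᶜ) := rfl
      rw [this]
      exact measurable_pi_apply 0 (MeasurableSet.singleton y).compl
    rw [hchain y, bind_eval _ _ hκ _ hSmeas]
    have : prepend y ⁻¹' {ω : ℕ → 𝒳 | ω 0 ≠ y} = ∅ := by
      ext ω; simp [prepend]
    simp [this]
  have μstart := start_ae μ P hμmeas hμchain
  have νstart := start_ae ν Pstar hνmeas hνchain
  -- values of u on B
  have huB : ∀ z ∈ B, (z ∈ A → u z = 1) ∧ (z ∉ A → u z = 0) := by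
    intro z hzB
    constructor
    · intro hzA
      refine le_antisymm (hule z) ?_
      have h0 : Efin B A 0 = {ω : ℕ → 𝒳 | ω 0 ∈ A} := by ext ω; simp [Efin]
      have hsub : {ω : ℕ → 𝒳 | ω 0 = z} ⊆ E := by
        intro ω hω
        rw [hEun]
        exact Set.mem_iUnion.mpr ⟨0, by simp [Efin, Set.mem_setOf_eq.mp hω, hzA]⟩
      calc (1 : ℝ≥0∞) = μ z Set.univ := (measure_univ (μ := μ z)).symm
        _ ≤ μ z {ω | ω 0 ≠ z} + μ z {ω | ω 0 = z} := by
            refine le_trans (measure_mono ?_) (measure_union_le _ _)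
            intro ω _; by_cases h : ω 0 = z <;> simp [h]
        _ = μ z {ω | ω 0 = z} := by rw [μstart z, zero_add]
        _ ≤ u z := measure_mono hsub
    · intro hzA
      have hsub : E ⊆ {ω : ℕ → 𝒳 | ω 0 ≠ z} := by
        intro ω hω
        rw [hEun] at hω
        obtain ⟨n, hn⟩ := Set.mem_iUnion.mp hω
        obtain ⟨hnA, hk⟩ := hn
        intro h0
        cases n with
        | zero => exact hzA (h0 ▸ hnA)
        | succ m => exact hk 0 (by omega) (h0.symm ▸ hzB)
      exact le_antisymm (le_trans (measure_mono hsub) (μstart z).le) zero_le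
  -- key: u z * ν z (Efin n) = μ z (Efin n) for all n, z
  have key : ∀ (n : ℕ) (z : 𝒳), u z * ν z (Efin B A n) = μ z (Efin B A n) := by
    intro n
    induction n with
    | zero =>
      intro z
      have h0 : (Efin B A 0 : Set (ℕ → 𝒳)) = {ω | ω 0 ∈ A} := by ext ω; simp [Efin]
      by_cases hzA : z ∈ A
      · have hμ1 : μ z (Efin B A 0) = 1 := by
          rw [h0]
          refine le_antisymm prob_le_one ?_
          have := hμprob z
          calc (1 : ℝ≥0∞) = μ z Set.univ := measure_univ.symm
            _ ≤ μ z {ω | ω 0 ≠ z} + μ z {ω | ω 0 ∈ A} := by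
                refine le_trans (measure_mono ?_) (measure_union_le _ _)
                intro ω _
                simp only [Set.mem_union, Set.mem_setOf_eq]
                by_cases h : ω 0 = z
                · exact Or.inr (h.symm ▸ hzA)
                · exact Or.inl h
            _ = μ z {ω | ω 0 ∈ A} := by rw [μstart z, zero_add]
        have hν1 : ν z (Efin B A 0) = 1 := by
          rw [h0]
          refine le_antisymm prob_le_one ?_
          have := hνprob z
          calc (1 : ℝ≥0∞) = ν z Set.univ := measure_univ.symm
            _ ≤ ν z {ω | ω 0 ≠ z} + ν z {ω | ω 0 ∈ A} := by
                refine le_trans (measure_mono ?_) (measure_union_le _ _)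
                intro ω _
                simp only [Set.mem_union, Set.mem_setOf_eq]
                by_cases h : ω 0 = z
                · exact Or.inr (h.symm ▸ hzA)
                · exact Or.inl h
            _ = ν z {ω | ω 0 ∈ A} := by rw [νstart z, zero_add]
        rw [hμ1, hν1, mul_one, (huB z (hAB hzA)).1 hzA]
      · have hμ0 : μ z (Efin B A 0) = 0 := by
          refine le_antisymm (le_trans (measure_mono ?_) (μstart z).le) zero_le
          rw [h0]; intro ω hω h0'; exact hzA (h0' ▸ hω)
        have hν0 : ν z (Efin B A 0) = 0 := by
          refine le_antisymm (le_trans (measure_mono ?_) (νstart z).le) zero_le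
          rw [h0]; intro ω hω h0'; exact hzA (h0' ▸ hω)
        rw [hμ0, hν0, mul_zero]
    | succ n ih =>
      intro z
      by_cases hzB : z ∈ B
      · -- both sides are zero since the path a.s. starts in B
        have hsub : (Efin B A (n+1) : Set (ℕ → 𝒳)) ⊆ {ω | ω 0 ≠ z} := by
          rintro ω ⟨_, hk⟩ h0
          exact hk 0 (by omega) (h0.symm ▸ hzB)
        have hμ0 : μ z (Efin B A (n+1)) = 0 :=
          le_antisymm (le_trans (measure_mono hsub) (μstart z).le) zero_le
        have hν0 : ν z (Efin B A (n+1)) = 0 :=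
          le_antisymm (le_trans (measure_mono hsub) (νstart z).le) zero_le
        rw [hμ0, hν0, mul_zero]
      · have hpre := prepend_preimage_Efin_succ B A z hzB n
        have hνmeasfun : Measurable fun w => ν w (Efin B A n) :=
          (Measure.measurable_coe (hEfinMeas n)).comp hνmeas
        have hdens : Measurable fun w => u w / u z := humeas.div measurable_const
        have hν_step : ν z (Efin B A (n+1)) =
            ∫⁻ w, (u w / u z) * ν w (Efin B A n) ∂(P z) := by
          rw [hνchain z, bind_eval _ _ hνmeas _ (hEfinMeas (n+1)), hPstar z hzB]
          simp only [hpre]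
          rw [lintegral_withDensity_eq_lintegral_mul _ hdens hνmeasfun]
          rfl
        have hμ_step : μ z (Efin B A (n+1)) = ∫⁻ w, μ w (Efin B A n) ∂(P z) := by
          rw [hμchain z, bind_eval _ _ hμmeas _ (hEfinMeas (n+1))]
          exact lintegral_congr fun w => by rw [hpre]
        rw [hν_step, hμ_step, ← lintegral_const_mul (f := fun w => u w / u z * ν w (Efin B A n)) _ (hdens.mul hνmeasfun)]
        refine lintegral_congr fun w => ?_
        have huz0 : u z ≠ 0 := (hupos z hzB).ne'
        calc u z * (u w / u z * ν w (Efin B A n))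
            = (u z * (u w / u z)) * ν w (Efin B A n) := by ring
          _ = u w * ν w (Efin B A n) := by rw [ENNReal.mul_div_cancel huz0 (hune z)]
          _ = μ w (Efin B A n) := ih w
  -- conclude
  intro y hyB
  have hsum : u y * ν y E = u y := by
    have hνE : ν y E = ∑' n, ν y (Efin B A n) := by
      rw [hEun]; exact measure_iUnion (Efin_disjoint B A hAB) hEfinMeas
    have hμE : μ y E = ∑' n, μ y (Efin B A n) := by
      rw [hEun]; exact measure_iUnion (Efin_disjoint B A hAB) hEfinMeas
    calc u y * ν y E = ∑' n, u y * ν y (Efin B A n) := by rw [hνE, ENNReal.tsum_mul_left]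
      _ = ∑' n, μ y (Efin B A n) := tsum_congr fun n => key n y
      _ = μ y E := hμE.symm
      _ = u y := rfl
  have hνE1 : ν y E = 1 := by
    have huy0 : u y ≠ 0 := (hupos y hyB).ne'
    have := hsum
    rw [show u y = u y * 1 by rw [mul_one]] at this
    exact (ENNReal.mul_right_inj huy0 (hune y)).mp (by rw [mul_one]; exact hsum)
  refine ⟨?_, hνE1⟩
  have hsub : E ⊆ {ω : ℕ → 𝒳 | hitTime B ω ≠ ⊤} := by
    rintro ω ⟨n, hn, _⟩
    simp [hn]
  have := hνprob y
  refine le_antisymm prob_le_one ?_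
  calc (1 : ℝ≥0∞) = ν y E := hνE1.symm
    _ ≤ ν y {ω | hitTime B ω ≠ ⊤} := measure_mono hsub
end
end

section
/- Under Assumption A, P(X + Z > t, Z ≤ t) ~ P(X > t) · E[X⁻]/|E[X]| as t → ∞ (i.e., the ratio of the two sides tends to 1). -/
open MeasureTheory ProbabilityTheory Filter Set
open scoped ENNReal NNReal

noncomputable section
set_option linter.unusedSectionVars false
set_option linter.unusedVariables false
set_option maxHeartbeats 1000000

/-- The (right) tail function `t ↦ P(X > t)` of a random variable, as a real number. -/
def tail {Ω : Type*} [MeasurableSpace Ω] (μ : Measure Ω) (X : Ω → ℝ) (t : ℝ) : ℝ :=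
  (μ {ω | t < X ω}).toReal

section TailAnalysis
variable {T : ℝ → ℝ} (hT : Antitone T) (hTpos : ∀ t, 0 < T t) (hT1 : ∀ t, T t ≤ 1)
  (hTint : IntegrableOn T (Ioi 0) volume)

include hT hTpos hT1 in
lemma conv_intIntegrable (t a b : ℝ) :
    IntervalIntegrable (fun s => T (t - s) * T s) volume a b := by
  have hm : Measurable T := hT.measurable
  refine (intervalIntegrable_const (c := (1:ℝ))).mono_fun ?_ ?_
  · exact ((hm.comp (measurable_const.sub measurable_id)).mul hm).aestronglyMeasurable
  · refine Eventually.of_forall fun s => ?_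
    simp only [Real.norm_eq_abs]
    rw [abs_of_nonneg (mul_nonneg (hTpos _).le (hTpos _).le), abs_one]
    exact mul_le_one₀ (hT1 _) (hTpos _).le (hT1 _)

/-- symmetry of the convolution integrand -/
lemma conv_symm (T : ℝ → ℝ) (t u v : ℝ) :
    (∫ s in u..v, T (t - s) * T s) = ∫ s in (t-v)..(t-u), T (t - s) * T s := by
  have := intervalIntegral.integral_comp_sub_left (a := u) (b := v)
    (fun s => T (t - s) * T s) t
  simp only [sub_sub_cancel] at this
  rw [← this]
  congr 1; ext s; ring

include hT hTpos hTint in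
/-- positivity of tail integrals over `Ioi` -/
lemma tail_integral_pos {h : ℝ} (hh : 0 ≤ h) :
    0 < ∫ s in Ioi h, T s := by
  have hint : IntegrableOn T (Ioi h) volume :=
    hTint.mono_set (Ioi_subset_Ioi hh)
  have h1 : (∫ s in Ioc h (h+1), T s) ≤ ∫ s in Ioi h, T s := by
    apply setIntegral_mono_set hint
    · exact Eventually.of_forall fun s => (hTpos s).le
    · exact Eventually.of_forall (by intro x hx; exact hx.1)
  have h2 : (0:ℝ) < ∫ s in Ioc h (h+1), T s := by
    have : (∫ s in Ioc h (h+1), T (h+1)) ≤ ∫ s in Ioc h (h+1), T s := by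
      apply setIntegral_mono_on (integrableOn_const (by simp))
        (hint.mono_set Ioc_subset_Ioi_self) measurableSet_Ioc
      intro x hx; exact hT hx.2
    have heq : (∫ _ in Ioc h (h+1), T (h+1)) = T (h+1) := by
      simp [Real.volume_Ioc]
    linarith [hTpos (h+1)]
  linarith

include hTint in
/-- splitting `Ioi 0` integral -/
lemma tail_split {h : ℝ} (hh : 0 ≤ h) :
    (∫ s in Ioi 0, T s) = (∫ s in (0:ℝ)..h, T s) + ∫ s in Ioi h, T s := by
  rw [intervalIntegral.integral_of_le hh, ← setIntegral_union]
  · rw [Ioc_union_Ioi_eq_Ioi hh]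
  · exact Ioc_disjoint_Ioi le_rfl
  · exact measurableSet_Ioi
  · exact hTint.mono_set Ioc_subset_Ioi_self
  · exact hTint.mono_set (Ioi_subset_Ioi hh)

include hT hTpos hT1 hTint in
/-- S* implies long-tailed: T(t-h)/T(t) → 1 -/
lemma longtailed
    (hconv : Tendsto (fun t => (∫ s in (0:ℝ)..t, T (t - s) * T s) / T t) atTop
      (nhds (2 * ∫ s in Ioi 0, T s))) (h : ℝ) (hh : 0 ≤ h) :
    Tendsto (fun t => T (t - h) / T t) atTop (nhds 1) := by
  set P := ∫ s in Ioi 0, T s with hP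
  set C1 := ∫ s in (0:ℝ)..h, T s with hC1
  set C2 := ∫ s in Ioi h, T s with hC2
  have hC2pos : 0 < C2 := tail_integral_pos hT hTpos hTint hh
  have hPC : P = C1 + C2 := tail_split hTint hh
  -- denominators tend to C2
  have hden : Tendsto (fun t : ℝ => ∫ s in h..(t/2), T s) atTop (nhds C2) := by
    apply intervalIntegral_tendsto_integral_Ioi h (hTint.mono_set (Ioi_subset_Ioi hh))
    exact (tendsto_id.atTop_div_const two_pos)
  -- upper bound function
  have hU : Tendsto (fun t => ((∫ s in (0:ℝ)..t, T (t - s) * T s) / T t - 2 * C1) /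
      (2 * ∫ s in h..(t/2), T s)) atTop (nhds 1) := by
    have : Tendsto (fun t => ((∫ s in (0:ℝ)..t, T (t - s) * T s) / T t - 2 * C1))
        atTop (nhds (2 * C2)) := by
      have := hconv.sub_const (2 * C1)
      convert this using 2
      rw [hPC]; ring
    have h2 : Tendsto (fun t : ℝ => 2 * ∫ s in h..(t/2), T s) atTop (nhds (2 * C2)) :=
      hden.const_mul 2
    have hne : (2 * C2) ≠ 0 := by positivity
    have hd := this.div h2 hne
    rwa [div_self hne] at hd
  -- squeeze
  have hlow : ∀ t, (1:ℝ) ≤ T (t - h) / T t := by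
    intro t
    rw [le_div_iff₀ (hTpos t), one_mul]
    exact hT (by linarith)
  refine tendsto_of_tendsto_of_tendsto_of_le_of_le' tendsto_const_nhds hU
    (Eventually.of_forall hlow) ?_
  filter_upwards [eventually_ge_atTop (2 * h + 2)] with t ht
  -- key decomposition for t large
  have hht2 : h ≤ t / 2 := by linarith
  have hhlt : h < t / 2 := by linarith
  have hint := conv_intIntegrable hT hTpos hT1 t
  -- split integral
  have hsplit : (∫ s in (0:ℝ)..t, T (t - s) * T s) =
      (∫ s in (0:ℝ)..h, T (t - s) * T s) + (∫ s in h..(t/2), T (t - s) * T s) +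
      (∫ s in (t/2)..(t-h), T (t - s) * T s) + (∫ s in (t-h)..t, T (t - s) * T s) := by
    rw [intervalIntegral.integral_add_adjacent_intervals (hint 0 h) (hint h (t/2)),
      intervalIntegral.integral_add_adjacent_intervals (hint 0 (t/2)) (hint (t/2) (t-h)),
      intervalIntegral.integral_add_adjacent_intervals (hint 0 (t-h)) (hint (t-h) t)]
  have hsym1 : (∫ s in (t/2)..(t-h), T (t - s) * T s) = ∫ s in h..(t/2), T (t - s) * T s := by
    rw [conv_symm T t (t/2) (t-h), show t - (t-h) = h by ring, show t - t/2 = t/2 by ring]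
  have hsym2 : (∫ s in (t-h)..t, T (t - s) * T s) = ∫ s in (0:ℝ)..h, T (t - s) * T s := by
    rw [conv_symm T t (t-h) t, show t - (t-h) = h by ring, show t - t = (0:ℝ) by ring]
  -- lower bounds on pieces
  have hb1 : T t * C1 ≤ ∫ s in (0:ℝ)..h, T (t - s) * T s := by
    rw [hC1, ← intervalIntegral.integral_const_mul]
    apply intervalIntegral.integral_mono_on hh
      (by exact (hT.intervalIntegrable).const_mul _) (hint 0 h)
    intro s hs
    exact mul_le_mul_of_nonneg_right (hT (by linarith [hs.1])) (hTpos s).le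
  have hb2 : T (t - h) * (∫ s in h..(t/2), T s) ≤ ∫ s in h..(t/2), T (t - s) * T s := by
    rw [← intervalIntegral.integral_const_mul]
    apply intervalIntegral.integral_mono_on hht2
      (by exact (hT.intervalIntegrable).const_mul _) (hint h (t/2))
    intro s hs
    exact mul_le_mul_of_nonneg_right (hT (by linarith [hs.1])) (hTpos s).le
  -- combine
  set D := ∫ s in h..(t/2), T s with hD
  have hDpos : 0 < D := by
    rw [hD, intervalIntegral.integral_of_le hht2]
    have : (∫ s in Ioc h (t/2), T (t/2)) ≤ ∫ s in Ioc h (t/2), T s := by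
      apply setIntegral_mono_on (integrableOn_const (by simp))
        ((hTint.mono_set (Ioi_subset_Ioi hh)).mono_set Ioc_subset_Ioi_self) measurableSet_Ioc
      intro x hx; exact hT hx.2
    have heq : (∫ _ in Ioc h (t/2), T (t/2)) = (t/2 - h) * T (t/2) := by
      simp [Real.volume_Ioc, ENNReal.toReal_ofReal (by linarith : (0:ℝ) ≤ t/2 - h), hht2]
    nlinarith [hTpos (t/2)]
  have hkey : 2 * (T t * C1) + 2 * (T (t-h) * D) ≤ ∫ s in (0:ℝ)..t, T (t - s) * T s := by
    rw [hsplit, hsym1, hsym2]; linarith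
  -- conclude division inequality
  rw [div_le_div_iff₀ (hTpos t) (by positivity)]
  have hexp : ((∫ s in (0:ℝ)..t, T (t - s) * T s) / T t - 2 * C1) * T t
      = (∫ s in (0:ℝ)..t, T (t - s) * T s) - 2 * C1 * T t := by
    rw [sub_mul, div_mul_cancel₀ _ (hTpos t).ne']
  rw [hexp]
  linarith


include hT hTpos hT1 hTint in
lemma conv_prefix_tendsto
    (hconv : Tendsto (fun t => (∫ s in (0:ℝ)..t, T (t - s) * T s) / T t) atTop
      (nhds (2 * ∫ s in Ioi 0, T s))) {a : ℝ} (ha : 0 ≤ a) :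
    Tendsto (fun t => (∫ s in (0:ℝ)..a, T (t - s) * T s) / T t) atTop
      (nhds (∫ s in (0:ℝ)..a, T s)) := by
  have hlong := longtailed hT hTpos hT1 hTint hconv a ha
  have hCa : (0:ℝ) ≤ ∫ s in (0:ℝ)..a, T s := by
    apply intervalIntegral.integral_nonneg ha
    exact fun s _ => (hTpos s).le
  have hup : Tendsto (fun t => (T (t - a) / T t) * ∫ s in (0:ℝ)..a, T s) atTop
      (nhds (∫ s in (0:ℝ)..a, T s)) := by
    simpa using hlong.mul_const (∫ s in (0:ℝ)..a, T s)
  refine tendsto_of_tendsto_of_tendsto_of_le_of_le' tendsto_const_nhds hup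
    (Eventually.of_forall fun t => ?_) (Eventually.of_forall fun t => ?_)
  · -- lower bound
    rw [le_div_iff₀ (hTpos t)]
    calc (∫ s in (0:ℝ)..a, T s) * T t = ∫ s in (0:ℝ)..a, T s * T t := by
          rw [intervalIntegral.integral_mul_const]
      _ ≤ ∫ s in (0:ℝ)..a, T (t - s) * T s := by
          apply intervalIntegral.integral_mono_on ha
            (hT.intervalIntegrable.mul_const _)
            (conv_intIntegrable hT hTpos hT1 t 0 a)
          intro s hs
          rw [mul_comm (T s) (T t)]
          exact mul_le_mul_of_nonneg_right (hT (by linarith [hs.1])) (hTpos s).le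
  · -- upper bound
    have hle : (∫ s in (0:ℝ)..a, T (t - s) * T s) ≤ T (t - a) * ∫ s in (0:ℝ)..a, T s := by
      rw [← intervalIntegral.integral_const_mul]
      apply intervalIntegral.integral_mono_on ha
        (conv_intIntegrable hT hTpos hT1 t 0 a)
        (hT.intervalIntegrable.const_mul _)
      intro s hs
      exact mul_le_mul_of_nonneg_right (hT (by linarith [hs.2])) (hTpos s).le
    have heq : T (t - a) / T t * (∫ s in (0:ℝ)..a, T s) * T t
        = T (t - a) * ∫ s in (0:ℝ)..a, T s := by
      field_simp
      rw [mul_right_comm, mul_div_cancel_right₀ _ (hTpos t).ne']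
    rw [div_le_iff₀ (hTpos t)]
    linarith

include hT hTpos hT1 hTint in
/-- main analytic limit -/
lemma final_analysis
    (hconv : Tendsto (fun t => (∫ s in (0:ℝ)..t, T (t - s) * T s) / T t) atTop
      (nhds (2 * ∫ s in Ioi 0, T s)))
    {a I : ℝ} (ha : 0 ≤ a) (hI : 0 < I) :
    Tendsto (fun t => ((1 - (∫ s in Ioi a, T s) / I) * T t
        + I⁻¹ * ∫ s in a..t, T (t - s) * T s) /
        (T t * (((∫ s in Ioi 0, T s) + I) / I))) atTop (nhds 1) := by
  set P := ∫ s in Ioi 0, T s with hP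
  set Ga := ∫ s in Ioi a, T s with hGa
  set c : ℝ := 1 - Ga / I with hc
  have hCa : (∫ s in (0:ℝ)..a, T s) = P - Ga := by
    have := tail_split hTint ha
    rw [← hP, ← hGa] at this; linarith
  set K : ℝ := (P + I) / I with hK
  have hprefix := conv_prefix_tendsto hT hTpos hT1 hTint hconv ha
  have hPpos : 0 < P := tail_integral_pos hT hTpos hTint (le_refl (0:ℝ))
  have hKpos : 0 < K := by rw [hK]; positivity
  have hF : Tendsto (fun t => (c + I⁻¹ * ((∫ s in (0:ℝ)..t, T (t - s) * T s) / T t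
      - (∫ s in (0:ℝ)..a, T (t - s) * T s) / T t)) / K) atTop (nhds 1) := by
    have hin : Tendsto (fun t => c + I⁻¹ * ((∫ s in (0:ℝ)..t, T (t - s) * T s) / T t
        - (∫ s in (0:ℝ)..a, T (t - s) * T s) / T t)) atTop (nhds K) := by
      have h1 := (hconv.sub hprefix).const_mul I⁻¹
      have h2 := h1.const_add c
      convert h2 using 2
      rw [hK, hc, hCa]
      field_simp
      ring
    have := hin.div_const K
    rwa [div_self hKpos.ne'] at this
  refine Tendsto.congr (fun t => ?_) hF
  have hsplit : (∫ s in a..t, T (t - s) * T s)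
      = (∫ s in (0:ℝ)..t, T (t - s) * T s) - ∫ s in (0:ℝ)..a, T (t - s) * T s := by
    have := intervalIntegral.integral_add_adjacent_intervals
      (conv_intIntegrable hT hTpos hT1 t 0 a) (conv_intIntegrable hT hTpos hT1 t a t)
    linarith
  rw [hsplit]
  have hTt := (hTpos t).ne'
  rw [hK]
  field_simp


include hT hTpos hT1 hTint in
lemma choose_a {I : ℝ} (hI : 0 < I) :
    ∃ a : ℝ, 0 ≤ a ∧ (∫ s in Ioi a, T s) ≤ I ∧ (a ≠ 0 → (∫ s in Ioi a, T s) = I) := by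
  set P := ∫ s in Ioi (0:ℝ), T s with hP
  by_cases hPI : P ≤ I
  · exact ⟨0, le_rfl, hPI, fun h => absurd rfl h⟩
  · push_neg at hPI
    set g : ℝ → ℝ := fun u => ∫ x in (0:ℝ)..u, T x with hg
    have hgcont : Continuous g :=
      intervalIntegral.continuous_primitive (fun a b => hT.intervalIntegrable) 0
    have hgtend : Tendsto g atTop (nhds P) :=
      intervalIntegral_tendsto_integral_Ioi 0 hTint tendsto_id
    obtain ⟨M, hM1, hM2⟩ := ((hgtend.eventually
      (eventually_gt_nhds (show P - I < P by linarith))).and (eventually_ge_atTop 0)).exists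
    have hIVT := intermediate_value_Icc hM2 hgcont.continuousOn
    have hg0 : g 0 = 0 := intervalIntegral.integral_same
    have hmem : P - I ∈ Icc (g 0) (g M) := ⟨by rw [hg0]; linarith, hM1.le⟩
    obtain ⟨a, haIcc, hga⟩ := hIVT hmem
    have hGa : (∫ s in Ioi a, T s) = I := by
      have hsplit := tail_split hTint haIcc.1
      have hga' : (∫ x in (0:ℝ)..a, T x) = P - I := hga
      rw [hga'] at hsplit
      linarith
    exact ⟨a, haIcc.1, le_of_eq hGa, fun _ => hGa⟩

end TailAnalysis

section Basic
variable {Ω : Type*} [MeasurableSpace Ω] (μ : Measure Ω) [IsProbabilityMeasure μ]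
  (X : Ω → ℝ)

lemma tail_anti : Antitone (tail μ X) := by
  intro s t hst
  apply ENNReal.toReal_mono (measure_ne_top μ _)
  exact measure_mono (fun ω h => lt_of_le_of_lt hst h)

lemma tail_le_one (t : ℝ) : tail μ X t ≤ 1 := by
  rw [tail, ← ENNReal.toReal_one]
  exact ENNReal.toReal_mono ENNReal.one_ne_top prob_le_one

lemma tail_nonneg (t : ℝ) : 0 ≤ tail μ X t := ENNReal.toReal_nonneg

lemma ofReal_tail (t : ℝ) : ENNReal.ofReal (tail μ X t) = μ {ω | t < X ω} :=
  ENNReal.ofReal_toReal (measure_ne_top μ _)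

variable {μ X}

lemma tail_pos (hpos : ∀ t : ℝ, 0 < μ {ω | t < X ω}) (t : ℝ) : 0 < tail μ X t :=
  ENNReal.toReal_pos (hpos t).ne' (measure_ne_top μ _)

/-- Layer cake: `E[X⁺] = ∫_{(0,∞)} tail`. -/
lemma integral_pos_part_eq (hX : Measurable X) (hint : Integrable X μ) :
    ∫ ω, max (X ω) 0 ∂μ = ∫ t in Ioi (0:ℝ), tail μ X t := by
  rw [Integrable.integral_eq_integral_meas_lt hint.pos_part
    (Eventually.of_forall fun ω => le_max_right _ _)]
  apply setIntegral_congr_fun measurableSet_Ioi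
  intro t ht
  have h2 : {a | t < max (X a) 0} = {ω | t < X ω} := by
    ext ω; simp only [mem_setOf_eq, lt_max_iff]
    exact ⟨fun h => h.elim id (fun h0 => absurd h0 (not_lt.mpr ht.le)), Or.inl⟩
  show (μ {a | t < max (X a) 0}).toReal = tail μ X t
  rw [h2]; rfl

/-- integrability of the tail on `(0,∞)` -/
lemma tail_integrableOn (hX : Measurable X) (hint : Integrable X μ) :
    IntegrableOn (tail μ X) (Ioi 0) volume := by
  have hmeas : Measurable fun t => μ {ω | t < X ω} :=
    Antitone.measurable (fun s t hst => measure_mono (fun ω h => lt_of_le_of_lt hst h))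
  have hlint : (∫⁻ t in Ioi (0:ℝ), μ {ω | t < X ω}) ≠ ∞ := by
    have hcongr : (∫⁻ t in Ioi (0:ℝ), μ {ω | t < X ω})
        = ∫⁻ t in Ioi (0:ℝ), μ {a | t < max (X a) 0} := by
      apply setLIntegral_congr_fun measurableSet_Ioi
      intro t ht
      show μ {ω | t < X ω} = μ {a | t < max (X a) 0}
      congr 1
      ext ω; simp only [mem_setOf_eq, lt_max_iff]
      exact ⟨Or.inl, fun h => h.elim id (fun h0 => absurd h0 (not_lt.mpr ht.le))⟩
    have key : (∫⁻ ω, ENNReal.ofReal (max (X ω) 0) ∂μ)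
        = ∫⁻ t in Ioi (0:ℝ), μ {a | t < max (X a) 0} :=
      lintegral_eq_lintegral_meas_lt μ
        (Eventually.of_forall fun ω => le_max_right _ _) (hX.max measurable_const).aemeasurable
    rw [hcongr, ← key]
    exact hint.pos_part.lintegral_lt_top.ne
  exact integrable_toReal_of_lintegral_ne_top (hmeas.aemeasurable.restrict) hlint

/-- `E[X⁻] = E[X⁺] + |E[X]|` when `E[X] < 0`. -/
lemma neg_part_eq (hX : Measurable X) (hint : Integrable X μ) (hneg : ∫ ω, X ω ∂μ < 0) :
    ∫ ω, max (-X ω) 0 ∂μ = (∫ ω, max (X ω) 0 ∂μ) + |∫ ω, X ω ∂μ| := by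
  have hsub : ∫ ω, (max (X ω) 0 - max (-X ω) 0) ∂μ
      = (∫ ω, max (X ω) 0 ∂μ) - ∫ ω, max (-X ω) 0 ∂μ :=
    integral_sub hint.pos_part hint.neg_part
  have heq : ∀ ω, max (X ω) 0 - max (-X ω) 0 = X ω := fun ω => by
    rcases le_total (X ω) 0 with h | h
    · rw [max_eq_right h, max_eq_left (by linarith)]; ring
    · rw [max_eq_left h, max_eq_right (by linarith)]; ring
  simp_rw [heq] at hsub
  rw [abs_of_neg hneg]
  linarith

end Basic

section MixMeasure
variable {T : ℝ → ℝ} (hT : Antitone T) (hTpos : ∀ t, 0 < T t) (hT1 : ∀ t, T t ≤ 1)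
  (hTint : IntegrableOn T (Ioi 0) volume) {I a : ℝ} (hI : 0 < I) (ha : 0 ≤ a)

include hT hTpos hTint hI ha in
lemma wd_Ioi (u : ℝ) :
    (volume.withDensity ((Ioi a).indicator fun z => ENNReal.ofReal (T z / I))) (Ioi u)
      = ENNReal.ofReal ((∫ s in Ioi (max a u), T s) / I) := by
  rw [withDensity_apply _ measurableSet_Ioi]
  have h1 : ∫⁻ z in Ioi u, (Ioi a).indicator (fun z => ENNReal.ofReal (T z / I)) z
      = ∫⁻ z in Ioi (max a u), ENNReal.ofReal (T z / I) := by
    rw [setLIntegral_indicator measurableSet_Ioi, Ioi_inter_Ioi]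
  rw [h1, ← ofReal_integral_eq_lintegral_ofReal]
  · congr 1
    rw [integral_div]
  · exact ((hTint.mono_set (Ioi_subset_Ioi (le_trans ha (le_max_left _ _)))).div_const I)
  · exact Eventually.of_forall fun s => div_nonneg (hTpos s).le hI.le

include hT hTpos hTint hI ha in
lemma mix_total :
    ((ENNReal.ofReal (1 - (∫ s in Ioi a, T s) / I)) • Measure.dirac (0:ℝ)
      + volume.withDensity ((Ioi a).indicator fun z => ENNReal.ofReal (T z / I))) univ
      = ENNReal.ofReal (1 - (∫ s in Ioi a, T s) / I) + ENNReal.ofReal ((∫ s in Ioi a, T s) / I) := by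
  rw [Measure.add_apply, Measure.smul_apply, smul_eq_mul, measure_univ, mul_one]
  congr 1
  have huniv : (volume.withDensity ((Ioi a).indicator fun z => ENNReal.ofReal (T z / I))) univ
      = (volume.withDensity ((Ioi a).indicator fun z => ENNReal.ofReal (T z / I))) (Ioi a) := by
    rw [withDensity_apply _ measurableSet_Ioi, withDensity_apply _ MeasurableSet.univ,
      Measure.restrict_univ, lintegral_indicator measurableSet_Ioi,
      setLIntegral_indicator measurableSet_Ioi, inter_self]
  rw [huniv, wd_Ioi hT hTpos hTint hI ha, max_self]

include hT hTpos hT1 hTint hI ha in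
/-- Identification of the integrated-tail distribution as an explicit mixture. -/
lemma measure_eq_mix
    (hGa : (∫ s in Ioi a, T s) ≤ I) (haI : a ≠ 0 → (∫ s in Ioi a, T s) = I)
    (ν : Measure ℝ) [IsProbabilityMeasure ν]
    (hν0 : ∀ u : ℝ, u < 0 → ν (Ioi u) = 1)
    (hνt : ∀ u : ℝ, 0 ≤ u → ν (Ioi u) = ENNReal.ofReal (min (I⁻¹ * ∫ s in Ioi u, T s) 1)) :
    ν = (ENNReal.ofReal (1 - (∫ s in Ioi a, T s) / I)) • Measure.dirac (0:ℝ)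
      + volume.withDensity ((Ioi a).indicator fun z => ENNReal.ofReal (T z / I)) := by
  set ρ := (ENNReal.ofReal (1 - (∫ s in Ioi a, T s) / I)) • Measure.dirac (0:ℝ)
      + volume.withDensity ((Ioi a).indicator fun z => ENNReal.ofReal (T z / I)) with hρ
  have hGanonneg : 0 ≤ (∫ s in Ioi a, T s) / I :=
    div_nonneg (setIntegral_nonneg measurableSet_Ioi fun s _ => (hTpos s).le) hI.le
  have hcle : (∫ s in Ioi a, T s) / I ≤ 1 := by
    rw [div_le_one hI]; exact hGa
  have hρuniv : ρ univ = 1 := by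
    rw [hρ, mix_total hT hTpos hTint hI ha, ← ENNReal.ofReal_add (by linarith) hGanonneg]
    norm_num
  have hρprob : IsProbabilityMeasure ρ := ⟨hρuniv⟩
  -- agreement on Ioi
  have hIoi : ∀ u : ℝ, ν (Ioi u) = ρ (Ioi u) := by
    intro u
    have hρIoi : ρ (Ioi u) = (if (0:ℝ) ∈ Ioi u then ENNReal.ofReal (1 - (∫ s in Ioi a, T s) / I)
        else 0) + ENNReal.ofReal ((∫ s in Ioi (max a u), T s) / I) := by
      rw [hρ, Measure.add_apply, Measure.smul_apply, smul_eq_mul,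
        Measure.dirac_apply' _ measurableSet_Ioi, wd_Ioi hT hTpos hTint hI ha]
      congr 1
      by_cases h : (0:ℝ) ∈ Ioi u <;> simp [h, indicator]
    rcases lt_or_ge u 0 with hu | hu
    · rw [hν0 u hu, hρIoi, if_pos (mem_Ioi.mpr hu)]
      have hmax : max a u = a := max_eq_left (by linarith)
      rw [hmax, ← ENNReal.ofReal_add (by linarith) hGanonneg]
      norm_num
    · rw [hνt u hu, hρIoi, if_neg (by simp [hu, not_lt])]
      have hGu_nonneg : 0 ≤ ∫ s in Ioi u, T s :=
        setIntegral_nonneg measurableSet_Ioi fun s _ => (hTpos s).le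
      have hmono : ∀ {x y : ℝ}, 0 ≤ x → x ≤ y → (∫ s in Ioi y, T s) ≤ ∫ s in Ioi x, T s := by
        intro x y hx hxy
        apply setIntegral_mono_set (hTint.mono_set (Ioi_subset_Ioi hx))
          (Eventually.of_forall fun s => (hTpos s).le)
          (Eventually.of_forall (Ioi_subset_Ioi hxy))
      rcases le_or_gt a u with hau | hua
      · rw [max_eq_right hau, zero_add]
        congr 1
        rw [min_eq_left, inv_mul_eq_div]
        rw [inv_mul_le_iff₀ hI, mul_one]
        exact le_trans (hmono ha hau) hGa
      · have haI' := haI (by intro h0; rw [h0] at hua; exact absurd hu (not_le.mpr hua))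
        rw [max_eq_left hua.le, zero_add, haI', div_self hI.ne']
        congr 1
        have h1 : (1:ℝ) ≤ I⁻¹ * ∫ s in Ioi u, T s := by
          rw [le_inv_mul_iff₀ hI, mul_one, ← haI']
          exact hmono hu hua.le
        rw [min_eq_right h1]
  -- conclude via Iic
  refine Measure.ext_of_Iic ν ρ (fun u => ?_)
  rw [← compl_Ioi, measure_compl measurableSet_Ioi (measure_ne_top ν _),
    measure_compl measurableSet_Ioi (measure_ne_top ρ _), measure_univ, measure_univ, hIoi u]
end MixMeasure

lemma numerator_eq {Ω : Type*} [MeasurableSpace Ω] (μ : Measure Ω) [IsProbabilityMeasure μ]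
    (X Z : Ω → ℝ) (hX : Measurable X) (hZ : Measurable Z) (hindep : IndepFun X Z μ)
    {T : ℝ → ℝ} (hT : Antitone T) (hTpos : ∀ s, 0 < T s) (hT1 : ∀ s, T s ≤ 1)
    (hTail : ∀ s : ℝ, μ {ω | s < X ω} = ENNReal.ofReal (T s))
    {I a c' : ℝ} (hI : 0 < I) (ha : 0 ≤ a) (hc' : 0 ≤ c')
    (hmap : μ.map Z = (ENNReal.ofReal c') • Measure.dirac (0:ℝ)
      + volume.withDensity ((Ioi a).indicator fun z => ENNReal.ofReal (T z / I)))
    (t : ℝ) (ht0 : 0 ≤ t) (hat : a ≤ t) :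
    μ {ω | t < X ω + Z ω ∧ Z ω ≤ t}
      = ENNReal.ofReal (c' * T t) + ENNReal.ofReal (I⁻¹ * ∫ s in a..t, T (t - s) * T s) := by
  have hTmeas : Measurable T := hT.measurable
  set St : Set (ℝ × ℝ) := {p : ℝ × ℝ | t < p.1 + p.2 ∧ p.2 ≤ t} with hSt
  have hStm : MeasurableSet St := by
    apply MeasurableSet.inter
    · exact measurableSet_lt measurable_const (measurable_fst.add measurable_snd)
    · exact measurableSet_le measurable_snd measurable_const
  have h0 : μ {ω | t < X ω + Z ω ∧ Z ω ≤ t} = (μ.map (fun ω => (X ω, Z ω))) St := by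
    rw [Measure.map_apply (hX.prodMk hZ) hStm]
    rfl
  have hprod : μ.map (fun ω => (X ω, Z ω)) = (μ.map X).prod (μ.map Z) :=
    (indepFun_iff_map_prod_eq_prod_map_map hX.aemeasurable hZ.aemeasurable).mp hindep
  rw [h0, hprod, Measure.prod_apply_symm hStm]
  have hinner : ∀ z : ℝ, (μ.map X) ((fun x => (x, z)) ⁻¹' St)
      = (Iic t).indicator (fun z => ENNReal.ofReal (T (t - z))) z := by
    intro z
    by_cases hz : z ≤ t
    · have hpre : ((fun x => (x, z)) ⁻¹' St) = Ioi (t - z) := by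
        ext x; simp only [hSt, mem_preimage, mem_setOf_eq, mem_Ioi]
        constructor
        · rintro ⟨h1, _⟩; linarith
        · intro h; exact ⟨by linarith, hz⟩
      rw [hpre, Measure.map_apply hX measurableSet_Ioi]
      have : (X ⁻¹' Ioi (t - z)) = {ω | t - z < X ω} := rfl
      rw [this, hTail, indicator_of_mem (mem_Iic.mpr hz)]
    · have hpre : ((fun x => (x, z)) ⁻¹' St) = ∅ := by
        ext x; simp only [hSt, mem_preimage, mem_setOf_eq, mem_empty_iff_false, iff_false]
        rintro ⟨_, h2⟩; exact hz h2
      rw [hpre, measure_empty, indicator_of_notMem (by simpa using hz)]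
  rw [lintegral_congr hinner, hmap, lintegral_add_measure, lintegral_smul_measure]
  have hfmeas : Measurable ((Iic t).indicator (fun z => ENNReal.ofReal (T (t - z)))) := by
    apply Measurable.indicator _ measurableSet_Iic
    exact (hTmeas.comp (measurable_const.sub measurable_id)).ennreal_ofReal
  have hdirac : ∫⁻ z, (Iic t).indicator (fun z => ENNReal.ofReal (T (t - z))) z
      ∂(Measure.dirac (0:ℝ)) = ENNReal.ofReal (T t) := by
    rw [lintegral_dirac' _ hfmeas, indicator_of_mem (mem_Iic.mpr ht0), sub_zero]
  have hgmeas : Measurable ((Ioi a).indicator fun z => ENNReal.ofReal (T z / I)) := by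
    apply Measurable.indicator _ measurableSet_Ioi
    exact (hTmeas.div_const I).ennreal_ofReal
  rw [hdirac, lintegral_withDensity_eq_lintegral_mul volume hgmeas hfmeas]
  have hindeq : (fun z => ((Ioi a).indicator (fun z => ENNReal.ofReal (T z / I)) *
      (Iic t).indicator (fun z => ENNReal.ofReal (T (t - z)))) z)
      = (Ioc a t).indicator (fun z => ENNReal.ofReal (T z / I) * ENNReal.ofReal (T (t - z))) := by
    funext z
    simp only [Pi.mul_apply, indicator]
    by_cases h1 : z ∈ Ioi a <;> by_cases h2 : z ∈ Iic t <;>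
      simp [h1, h2, mem_Ioc, mem_Ioi.mp, *] <;> simp only [mem_Ioi] at h1 <;>
      simp only [mem_Iic] at h2 <;> simp [mem_Ioc, h1, h2]
  rw [hindeq, lintegral_indicator measurableSet_Ioc]
  have hmerge : ∀ z : ℝ, ENNReal.ofReal (T z / I) * ENNReal.ofReal (T (t - z))
      = ENNReal.ofReal ((T z / I) * T (t - z)) := fun z =>
    (ENNReal.ofReal_mul (div_nonneg (hTpos z).le hI.le)).symm
  rw [lintegral_congr fun z => hmerge z]
  have hintgr : IntegrableOn (fun z => (T z / I) * T (t - z)) (Ioc a t) volume := by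
    apply Integrable.mono' (integrable_const (1/I))
    · exact (((hTmeas.div_const I).mul
        (hTmeas.comp (measurable_const.sub measurable_id))).aestronglyMeasurable).restrict
    · refine Eventually.of_forall fun z => ?_
      rw [Real.norm_eq_abs,
        abs_of_nonneg (mul_nonneg (div_nonneg (hTpos z).le hI.le) (hTpos _).le)]
      calc T z / I * T (t - z) ≤ 1 / I * 1 := by
            apply mul_le_mul _ (hT1 _) (hTpos _).le (by positivity)
            gcongr
            exact hT1 z
        _ = 1 / I := by rw [mul_one]
  rw [← ofReal_integral_eq_lintegral_ofReal hintgr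
    (Eventually.of_forall fun z =>
      mul_nonneg (div_nonneg (hTpos z).le hI.le) (hTpos _).le)]
  rw [smul_eq_mul, ← ENNReal.ofReal_mul hc']
  congr 2
  rw [intervalIntegral.integral_of_le hat, ← integral_const_mul]
  apply setIntegral_congr_fun measurableSet_Ioc
  intro z _
  show T z / I * T (t - z) = I⁻¹ * (T (t - z) * T z)
  rw [div_eq_inv_mul]
  ring


/-- under Assumption A,
`P(X + Z > t, Z ≤ t) ~ P(X > t) · E[X⁻]/|E[X]|` as `t → ∞`. -/
theorem statement11 {Ω : Type*} [MeasurableSpace Ω] (μ : Measure Ω)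
    [IsProbabilityMeasure μ]
    (X Z : Ω → ℝ) (hX : Measurable X) (hZ : Measurable Z)
    (hindep : IndepFun X Z μ)
    (hint : Integrable X μ) (hneg : ∫ ω, X ω ∂μ < 0)
    (hpos : ∀ t : ℝ, 0 < μ {ω | t < X ω})
    -- Assumption A: `X⁺ ∈ S*`
    (hSstar : Tendsto (fun t => (∫ s in (0:ℝ)..t, tail μ X (t - s) * tail μ X s) /
      (2 * (∫ ω, max (X ω) 0 ∂μ) * tail μ X t)) atTop (nhds 1))
    -- `Z ≥ 0` has the integrated-tail distribution of `X`
    (hZnn : ∀ ω, 0 ≤ Z ω)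
    (hZtail : ∀ t : ℝ, 0 ≤ t →
      tail μ Z t = min (|∫ ω, X ω ∂μ|⁻¹ * ∫ s in Set.Ioi t, tail μ X s) 1) :
    Tendsto (fun t => (μ {ω | t < X ω + Z ω ∧ Z ω ≤ t}).toReal /
        (tail μ X t * ((∫ ω, max (-X ω) 0 ∂μ) / |∫ ω, X ω ∂μ|)))
      atTop (nhds 1) := by
  set T := tail μ X with hTdef
  have hTanti : Antitone T := tail_anti μ X
  have hTpos' : ∀ t, 0 < T t := tail_pos hpos
  have hT1 : ∀ t, T t ≤ 1 := tail_le_one μ X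
  have hTint : IntegrableOn T (Ioi 0) volume := tail_integrableOn hX hint
  set P := ∫ s in Ioi (0:ℝ), T s with hPdef
  have hPeq : ∫ ω, max (X ω) 0 ∂μ = P := integral_pos_part_eq hX hint
  have hPpos : 0 < P := tail_integral_pos hTanti hTpos' hTint le_rfl
  set I := |∫ ω, X ω ∂μ| with hIdef
  have hIpos : 0 < I := abs_pos.mpr (ne_of_lt hneg)
  have hEXm : ∫ ω, max (-X ω) 0 ∂μ = P + I := by
    rw [neg_part_eq hX hint hneg, hPeq]
  -- normalized convolution limit
  rw [hPeq] at hSstar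
  have hconv : Tendsto (fun t => (∫ s in (0:ℝ)..t, T (t - s) * T s) / T t)
      atTop (nhds (2 * P)) := by
    have h := hSstar.mul_const (2 * P)
    rw [one_mul] at h
    refine h.congr fun t => ?_
    have h1 : T t ≠ 0 := (hTpos' t).ne'
    have h2 : P ≠ 0 := hPpos.ne'
    field_simp
  -- choose the left endpoint of the density region
  obtain ⟨a, ha0, hGa_le, hGa_eq⟩ := choose_a hTanti hTpos' hT1 hTint hIpos
  set Ga := ∫ s in Ioi a, T s with hGadef
  set c' : ℝ := 1 - Ga / I with hc'def
  have hc'0 : 0 ≤ c' := by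
    have : Ga / I ≤ 1 := (div_le_one hIpos).mpr hGa_le
    rw [hc'def]; linarith
  -- identify the law of Z
  have hνprob : IsProbabilityMeasure (μ.map Z) := Measure.isProbabilityMeasure_map hZ.aemeasurable
  have hν0 : ∀ u : ℝ, u < 0 → (μ.map Z) (Ioi u) = 1 := by
    intro u hu
    rw [Measure.map_apply hZ measurableSet_Ioi]
    have huniv : Z ⁻¹' Ioi u = univ := eq_univ_of_forall fun ω => lt_of_lt_of_le hu (hZnn ω)
    rw [huniv, measure_univ]
  have hνt : ∀ u : ℝ, 0 ≤ u →
      (μ.map Z) (Ioi u) = ENNReal.ofReal (min (I⁻¹ * ∫ s in Ioi u, T s) 1) := by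
    intro u hu
    rw [Measure.map_apply hZ measurableSet_Ioi]
    have hset : Z ⁻¹' Ioi u = {ω | u < Z ω} := rfl
    rw [hset, ← ofReal_tail μ Z u, hZtail u hu]
  have hmap := measure_eq_mix hTanti hTpos' hT1 hTint hIpos ha0 hGa_le hGa_eq
    (μ.map Z) hν0 hνt
  have hTail : ∀ s : ℝ, μ {ω | s < X ω} = ENNReal.ofReal (T s) :=
    fun s => (ofReal_tail μ X s).symm
  -- numerator formula, for large t
  have hnum : ∀ t : ℝ, max a 0 ≤ t → (μ {ω | t < X ω + Z ω ∧ Z ω ≤ t}).toReal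
      = c' * T t + I⁻¹ * ∫ s in a..t, T (t - s) * T s := by
    intro t ht
    have ht0 : (0:ℝ) ≤ t := le_trans (le_max_right a 0) ht
    have hat : a ≤ t := le_trans (le_max_left a 0) ht
    rw [numerator_eq μ X Z hX hZ hindep hTanti hTpos' hT1 hTail hIpos ha0 hc'0 hmap t ht0 hat]
    have hnn2 : 0 ≤ I⁻¹ * ∫ s in a..t, T (t - s) * T s := by
      apply mul_nonneg (inv_nonneg.mpr hIpos.le)
      exact intervalIntegral.integral_nonneg hat
        (fun s _ => mul_nonneg (hTpos' _).le (hTpos' _).le)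
    rw [ENNReal.toReal_add ENNReal.ofReal_ne_top ENNReal.ofReal_ne_top,
      ENNReal.toReal_ofReal (mul_nonneg hc'0 (hTpos' t).le), ENNReal.toReal_ofReal hnn2]
  -- final limit
  have hfinal := final_analysis hTanti hTpos' hT1 hTint hconv ha0 hIpos
  refine Tendsto.congr' ?_ hfinal
  filter_upwards [eventually_ge_atTop (max a 0)] with t ht
  rw [hnum t ht, hEXm]
end
end
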